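/- For every n ≥ 1, det_{0≤i,j≤n−1}( 2^i · C(i+2j+1, 2j+1) − C(i−1, 2j+1) ) = det_{0≤i,j≤n−1}( g_20V(u,v)|_{u^i v^j} ), where C(·,·) is the binomial coefficient with the convention that C(i−1, 2j+1) = 0 when i = 0 (and more generally C(m,p) = 0 when m < p). -/

import Mathlib

noncomputable section

/-- Formal power series in two variables `u, v` over `ℚ`. -/
abbrev PS : Type := MvPowerSeries (Fin 2) ℚ

def uu : PS := MvPowerSeries.X 0
def vv : PS := MvPowerSeries.X 1

/-- Coefficient of `u^i v^j`. -/
def cf (i j : ℕ) (f : PS) : ℚ :=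
  MvPowerSeries.coeff (Finsupp.single 0 i + Finsupp.single 1 j) f

/-- `f_DT(u,v) = (1+u)/(1 - v - 4uv - u²v + u²v²)` as a power series. -/
def fDT : PS := (1 + uu) * (1 - vv - 4 * uu * vv - uu ^ 2 * vv + uu ^ 2 * vv ^ 2)⁻¹

/-- `g_20V(u,v) = (1+u²)(1+2u-u²)/((1-u²v)((1-u)² - v(1+u)²))` as a power series. -/
def g20V : PS :=
  (1 + uu ^ 2) * (1 + 2 * uu - uu ^ 2) *
    ((1 - uu ^ 2 * vv) * ((1 - uu) ^ 2 - vv * (1 + uu) ^ 2))⁻¹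

/-!
By partial fractions, `g_20V = (1+u)²/((1-u)² - v(1+u)²) - u²/(1 - u²v)`, so the coefficient of
`v^j` in `g_20V` is the series `((1+u)/(1-u))^(2j+2) - u^(2j+2)` in `u`. The substitution
`u = x/(1-x)` sends `(1+u)/(1-u)` to `1/(1-2x)`, hence these columns to
`(1-2x)^-(2j+2) - (x/(1-x))^(2j+2)`, whose coefficients are the binomial entries. On coefficient
vectors the substitution acts by the lower unitriangular matrix `(coeff i ((x/(1-x))^k))_{i,k}`,
so it does not change the determinant.
-/

open PowerSeries

section SubstitutionMatrix

variable {R : Type*} [CommRing R]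

lemma coeff_pow_eq_zero_of_lt {a : R⟦X⟧} (ha : constantCoeff a = 0) {i k : ℕ} (h : i < k) :
    coeff i (a ^ k) = 0 := by
  obtain ⟨b, rfl⟩ := X_dvd_iff.mpr ha
  rw [mul_pow, coeff_X_pow_mul', if_neg (by omega)]

lemma coeff_pow_self {a : R⟦X⟧} (ha : constantCoeff a = 0) (k : ℕ) :
    coeff k (a ^ k) = coeff 1 a ^ k := by
  obtain ⟨b, rfl⟩ := X_dvd_iff.mpr ha
  rw [mul_pow, coeff_X_pow_mul', if_pos le_rfl, Nat.sub_self, coeff_zero_eq_constantCoeff_apply,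
    map_pow, coeff_succ_X_mul, coeff_zero_eq_constantCoeff_apply]

lemma sum_coeff_pow_mul_coeff_eq_coeff_subst {a : R⟦X⟧} (ha : constantCoeff a = 0) (f : R⟦X⟧)
    {n i : ℕ} (hi : i < n) :
    ∑ k ∈ Finset.range n, coeff i (a ^ k) * coeff k f = coeff i (f.subst a) := by
  rw [coeff_subst' (HasSubst.of_constantCoeff_zero' ha),
    finsum_eq_sum_of_support_subset _ (s := Finset.range n)]
  · exact Finset.sum_congr rfl fun k _ => by rw [smul_eq_mul, mul_comm]
  · intro k hk
    by_contra hkn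
    rw [Finset.coe_range, Set.mem_Iio] at hkn
    exact hk (by simp only [coeff_pow_eq_zero_of_lt ha (hi.trans_le (not_lt.mp hkn)), smul_zero])

theorem det_coeff_subst {a : R⟦X⟧} (ha₀ : constantCoeff a = 0) (ha₁ : coeff 1 a = 1) {n : ℕ}
    (F : Fin n → R⟦X⟧) :
    (Matrix.of fun i j : Fin n => coeff i ((F j).subst a)).det =
      (Matrix.of fun i j : Fin n => coeff i (F j)).det := by
  have hmul : (Matrix.of fun i j : Fin n => coeff i ((F j).subst a)) =
      (Matrix.of fun i k : Fin n => coeff i (a ^ (k : ℕ))) *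
        Matrix.of fun i j : Fin n => coeff i (F j) := by
    ext i j
    rw [Matrix.mul_apply, Matrix.of_apply, ← sum_coeff_pow_mul_coeff_eq_coeff_subst ha₀ _ i.isLt]
    exact (Fin.sum_univ_eq_sum_range (fun k => coeff i (a ^ k) * coeff k (F j)) n).symm
  have hL : (Matrix.of fun i k : Fin n => coeff i (a ^ (k : ℕ))).det = 1 := by
    have hlower : (Matrix.of fun i k : Fin n => coeff i (a ^ (k : ℕ))).IsLowerTriangular :=
      fun i k hik => coeff_pow_eq_zero_of_lt ha₀ hik
    rw [Matrix.det_of_isLowerTriangular _ hlower]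
    exact Finset.prod_eq_one fun k _ => by simp [coeff_pow_self ha₀, ha₁]
  rw [hmul, Matrix.det_mul, hL, one_mul]

end SubstitutionMatrix

section XDivOneSubX

variable {K : Type*} [Field K]

lemma inv_one_sub_X_pow_succ (d : ℕ) :
    ((1 - X : K⟦X⟧)⁻¹) ^ (d + 1) = mk fun n => (Nat.choose (d + n) d : K) := by
  rw [← mk_one_pow_eq_mk_choose_add,
    (PowerSeries.inv_eq_iff_mul_eq_one (by simp)).mpr (mk_one_mul_one_sub_eq_one K)]

def xDivOneSubX : K⟦X⟧ := X * (1 - X)⁻¹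

lemma constantCoeff_xDivOneSubX : constantCoeff (xDivOneSubX : K⟦X⟧) = 0 := by
  simp [xDivOneSubX]

lemma coeff_one_xDivOneSubX : coeff 1 (xDivOneSubX : K⟦X⟧) = 1 := by
  simp [xDivOneSubX, coeff_succ_X_mul]

lemma coeff_succ_xDivOneSubX_pow_succ (i d : ℕ) :
    coeff (i + 1) ((xDivOneSubX : K⟦X⟧) ^ (d + 1)) = i.choose d := by
  rw [xDivOneSubX, mul_pow, inv_one_sub_X_pow_succ, coeff_X_pow_mul', coeff_mk]
  split_ifs with h
  · rw [show d + (i + 1 - (d + 1)) = i by omega]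
  · rw [Nat.choose_eq_zero_of_lt (by omega), Nat.cast_zero]

lemma subst_xDivOneSubX_one_add_X_mul_inv_one_sub_X :
    ((1 + X) * (1 - X)⁻¹ : K⟦X⟧).subst xDivOneSubX = rescale (2 : K) (1 - X)⁻¹ := by
  have hs : HasSubst (xDivOneSubX : K⟦X⟧) := .of_constantCoeff_zero' constantCoeff_xDivOneSubX
  set q : K⟦X⟧ := (1 - X)⁻¹
  set Q : K⟦X⟧ := q.subst xDivOneSubX
  have hq : (1 - X) * q = 1 := PowerSeries.mul_inv_cancel _ (by simp)
  have hQ : (1 - X * q) * Q = 1 := by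
    have := congrArg (substAlgHom hs) hq
    rwa [map_mul, map_sub, map_one, substAlgHom_X, coe_substAlgHom] at this
  have hr : (1 - 2 * X) * rescale 2 q = 1 := by
    have := congrArg (rescale (2 : K)) hq
    rwa [map_mul, map_sub, map_one, rescale_X, map_ofNat] at this
  rw [← coe_substAlgHom hs, map_mul, map_add, map_one, substAlgHom_X, coe_substAlgHom]
  change (1 + X * q) * Q = _
  linear_combination (-(1 + X * q) * Q) * hr + rescale 2 q * hQ + 2 * X * rescale 2 q * Q * hq

def g20VColumn (j : ℕ) : K⟦X⟧ := ((1 + X) * (1 - X)⁻¹) ^ (2 * j + 2) - X ^ (2 * j + 2)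

lemma coeff_subst_xDivOneSubX_g20VColumn (i j : ℕ) :
    coeff i ((g20VColumn j : K⟦X⟧).subst xDivOneSubX) =
      2 ^ i * ((i + 2 * j + 1).choose (2 * j + 1) : K) - ((i - 1).choose (2 * j + 1) : K) := by
  have hs : HasSubst (xDivOneSubX : K⟦X⟧) := .of_constantCoeff_zero' constantCoeff_xDivOneSubX
  rw [g20VColumn, ← coe_substAlgHom hs, map_sub, map_pow, map_pow, substAlgHom_X,
    coe_substAlgHom, subst_xDivOneSubX_one_add_X_mul_inv_one_sub_X, ← map_pow, map_sub,
    coeff_rescale, inv_one_sub_X_pow_succ, coeff_mk, add_comm (2 * j + 1) i, ← add_assoc]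
  congr 1
  cases i with
  | zero =>
    rw [coeff_pow_eq_zero_of_lt constantCoeff_xDivOneSubX (by omega),
      Nat.choose_eq_zero_of_lt (by omega), Nat.cast_zero]
  | succ i => rw [coeff_succ_xDivOneSubX_pow_succ, Nat.add_sub_cancel]

end XDivOneSubX

def ofU : ℚ⟦X⟧ →ₐ[ℚ] PS := substAlgHom (HasSubst.X 0)

lemma ofU_X : ofU X = uu := substAlgHom_X _

lemma cf_add (i j : ℕ) (F G : PS) : cf i j (F + G) = cf i j F + cf i j G := map_add _ F G

lemma cf_sub (i j : ℕ) (F G : PS) : cf i j (F - G) = cf i j F - cf i j G := map_sub _ F G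

lemma cf_sum {ι : Type*} (s : Finset ι) (F : ι → PS) (i j : ℕ) :
    cf i j (∑ t ∈ s, F t) = ∑ t ∈ s, cf i j (F t) := map_sum _ F s

lemma cf_ofU (f : ℚ⟦X⟧) (i j : ℕ) : cf i j (ofU f) = if j = 0 then coeff i f else 0 := by
  rw [cf, ofU, coe_substAlgHom, coeff_subst_single]
  by_cases hj : j = 0 <;> simp [hj, Finsupp.ext_iff, Fin.forall_fin_two]

lemma cf_vv_pow_mul (t i j : ℕ) (F : PS) :
    cf i j (vv ^ t * F) = if t ≤ j then cf i (j - t) F else 0 := by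
  have hle : Finsupp.single (1 : Fin 2) t ≤ Finsupp.single 0 i + Finsupp.single 1 j ↔ t ≤ j := by
    rw [Finsupp.le_def, Fin.forall_fin_two]
    simp
  have hsub : Finsupp.single (0 : Fin 2) i + Finsupp.single 1 j - Finsupp.single 1 t =
      Finsupp.single 0 i + Finsupp.single 1 (j - t) := by
    ext a; fin_cases a <;> simp
  rw [cf, vv, MvPowerSeries.X_pow_eq, MvPowerSeries.coeff_monomial_mul]
  by_cases h : t ≤ j
  · rw [if_pos (hle.mpr h), if_pos h, hsub, one_mul, cf]
  · rw [if_neg (mt hle.mp h), if_neg h]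

lemma cf_ofU_mul_inv_one_sub_vv_mul (f h : ℚ⟦X⟧) (i j : ℕ) :
    cf i j (ofU f * (1 - vv * ofU h)⁻¹) = coeff i (f * h ^ j) := by
  set x := vv * ofU h
  have hx : (1 - x) * (1 - x)⁻¹ = 1 := MvPowerSeries.mul_inv_cancel _ (by simp [x, vv])
  have hpow (t : ℕ) : x ^ t = vv ^ t * ofU (h ^ t) := by rw [mul_pow, map_pow]
  -- truncate the geometric series in `x` after `v^j`; the remainder is divisible by `v^(j+1)`
  have hsplit : ofU f * (1 - x)⁻¹ =
      ∑ t ∈ Finset.range (j + 1), x ^ t * ofU f + x ^ (j + 1) * (ofU f * (1 - x)⁻¹) := by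
    rw [← Finset.sum_mul]
    linear_combination (-(ofU f * (1 - x)⁻¹)) * mul_neg_geom_sum x (j + 1) +
      ofU f * (∑ t ∈ Finset.range (j + 1), x ^ t) * hx
  have hterm (t : ℕ) (ht : t ≤ j) :
      cf i j (x ^ t * ofU f) = if t = j then coeff i (f * h ^ j) else 0 := by
    rw [hpow, mul_assoc, ← map_mul, cf_vv_pow_mul, if_pos ht, cf_ofU]
    by_cases htj : t = j
    · rw [if_pos (by omega), if_pos htj, htj, mul_comm]
    · rw [if_neg (by omega), if_neg htj]
  rw [hsplit, cf_add, cf_sum, hpow, mul_assoc, cf_vv_pow_mul, if_neg (by omega), add_zero,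
    Finset.sum_congr rfl fun t ht => hterm t (Finset.mem_range_succ_iff.mp ht),
    Finset.sum_ite_eq', if_pos (Finset.self_mem_range_succ j)]

lemma g20V_eq :
    g20V = ofU (((1 + X) * (1 - X)⁻¹) ^ 2) * (1 - vv * ofU (((1 + X) * (1 - X)⁻¹) ^ 2))⁻¹ -
      ofU (X ^ 2) * (1 - vv * ofU (X ^ 2))⁻¹ := by
  set w := ofU (1 - X)⁻¹
  have hw : (1 - uu) * w = 1 := by
    rw [← ofU_X, ← map_one ofU, ← map_sub, ← map_mul, PowerSeries.mul_inv_cancel _ (by simp)]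
  simp only [map_pow, map_mul, map_add, map_one, ofU_X]
  set E₁ : PS := 1 - vv * uu ^ 2
  set E₂ : PS := 1 - vv * ((1 + uu) * w) ^ 2
  have hE₁ : E₁ * E₁⁻¹ = 1 := MvPowerSeries.mul_inv_cancel _ (by simp [E₁, vv])
  have hE₂ : E₂ * E₂⁻¹ = 1 := MvPowerSeries.mul_inv_cancel _ (by simp [E₂, vv])
  rw [g20V, eq_comm, MvPowerSeries.eq_mul_inv_iff_mul_eq (by simp [uu, vv])]
  -- `(1+u)²(1-u²v) - u²((1-u)² - v(1+u)²) = (1+u²)(1+2u-u²)`, and `E₂ = (1-u)⁻²((1-u)² - v(1+u)²)`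
  linear_combination (1 + uu) ^ 2 * E₁ * ((1 - uu) * w) ^ 2 * hE₂
    - uu ^ 2 * ((1 - uu) ^ 2 - vv * (1 + uu) ^ 2) * hE₁
    + ((1 + uu) ^ 2 * E₁ + (1 + uu) ^ 4 * E₁ * w ^ 2 * E₂⁻¹ * vv) * ((1 - uu) * w + 1) * hw

lemma cf_g20V (i j : ℕ) : cf i j g20V = coeff i (g20VColumn j) := by
  rw [g20V_eq, cf_sub, cf_ofU_mul_inv_one_sub_vv_mul,
    cf_ofU_mul_inv_one_sub_vv_mul, ← pow_succ', ← pow_succ', ← pow_mul, ← pow_mul,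
    show 2 * (j + 1) = 2 * j + 2 by ring, g20VColumn, map_sub]

theorem det_binomial_eq_det_g20V (n : ℕ) :
    Matrix.det (Matrix.of fun i j : Fin n =>
      (2 ^ (i : ℕ) * (((i : ℕ) + 2 * (j : ℕ) + 1).choose (2 * (j : ℕ) + 1)) : ℚ) -
        ((((i : ℕ) - 1).choose (2 * (j : ℕ) + 1)) : ℚ)) =
    Matrix.det (Matrix.of fun i j : Fin n => cf i j g20V) := by
  simp_rw [← coeff_subst_xDivOneSubX_g20VColumn, cf_g20V]
  exact det_coeff_subst constantCoeff_xDivOneSubX coeff_one_xDivOneSubX _
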